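/- Combining Lemma partial_meth2 over the canonical basis: with p, q independent i.i.d.-uniform grids on D (unit measure) and D_{p,q} ∈ ℝ^{d₀} the vector with i-th component 2·Re⟨B_p ∂_{e_i} μ_θ(p), B_q μ_θ(q) − ẑ⟩, and assuming the directional derivative formula ∂_h G(θ) = 2·Re⟨S ∂_h μ_θ, S μ_θ − ẑ⟩ holds for G(θ) = ‖Sμ_θ − ẑ‖², one has E_{p,q}[D_{p,q}] = ∇G(θ). -/

import Mathlib

/-!
Each discretized sketch `B_p f(p)` is the empirical average of `P` i.i.d. copies of
`x ↦ e^{-i⟨ω_l,x⟩} f(x)`, hence an unbiased estimator of `S f`. Since the two grids are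
independent, the expectation of the Hermitian product of the two estimators factors into the
product of their expectations, so `E D_{p,q}` is `2·Re⟨S ∂_{e_i} μ_θ, S μ_θ − ẑ⟩`, which is the
assumed partial derivative of `G`.
-/

open MeasureTheory Complex
noncomputable section

/-- Standard inner product on `Fin d → ℝ`. -/
def ip {d : ℕ} (w x : Fin d → ℝ) : ℝ := ∑ i, w i * x i

/-- The Fourier-moment sketching operator: `(Sμ)_l = ∫_D e^{-i⟨ω_l,x⟩} μ(x) dx`. -/
def sk {d : ℕ} (m : ℕ) (ω : Fin m → Fin d → ℝ) (D : Set (Fin d → ℝ))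
    (μ : (Fin d → ℝ) → ℂ) : Fin m → ℂ :=
  fun l => ∫ x in D, Complex.exp (-Complex.I * (ip (ω l) x : ℂ)) * μ x

/-- The discretized sketch on a grid `p`: `(B_p μ(p))_l = (1/P) ∑_r e^{-i⟨ω_l,p_r⟩} μ(p_r)`. -/
def dsk {d : ℕ} (m P : ℕ) (ω : Fin m → Fin d → ℝ)
    (μ : (Fin d → ℝ) → ℂ) (p : Fin P → (Fin d → ℝ)) : Fin m → ℂ :=
  fun l => (∑ r : Fin P, Complex.exp (-Complex.I * (ip (ω l) (p r) : ℂ)) * μ (p r)) / (P : ℂ)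

/-- The Hermitian inner product on `ℂ^m`. -/
def hinn {m : ℕ} (u v : Fin m → ℂ) : ℂ := ∑ l, u l * (starRingEnd ℂ) (v l)

section EmpiricalAverage

variable {α 𝕜 : Type*} [MeasurableSpace α] [RCLike 𝕜] {ν : Measure α} {P : ℕ} {g : α → 𝕜}

theorem integrable_pi_empiricalAverage [IsFiniteMeasure ν] (hg : Integrable g ν) :
    Integrable (fun p : Fin P → α => (∑ r, g (p r)) / P) (Measure.pi fun _ => ν) :=
  (integrable_finsetSum _ fun _ _ => integrable_comp_eval hg).div_const _

theorem integral_pi_empiricalAverage [IsProbabilityMeasure ν] (hP : P ≠ 0) (hg : Integrable g ν) :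
    ∫ p : Fin P → α, (∑ r, g (p r)) / P ∂(Measure.pi fun _ => ν) = ∫ x, g x ∂ν := by
  rw [integral_div, integral_finsetSum _ fun _ _ => integrable_comp_eval hg]
  simp only [integral_comp_eval (μ := fun _ : Fin P => ν) hg.aestronglyMeasurable,
    Finset.sum_const, Finset.card_univ, Fintype.card_fin, nsmul_eq_mul]
  field_simp

end EmpiricalAverage

theorem MeasureTheory.Integrable.conj {α 𝕜 : Type*} [MeasurableSpace α] [RCLike 𝕜] {μ : Measure α}
    {f : α → 𝕜} (hf : Integrable f μ) : Integrable (fun x => starRingEnd 𝕜 (f x)) μ :=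
  (RCLike.conjCLE (K := 𝕜)).toContinuousLinearMap.integrable_comp hf

section HermitianProduct

variable {α β : Type*} [MeasurableSpace α] [MeasurableSpace β] {μ : Measure α} {ν : Measure β}
  {m : ℕ} {U : α → Fin m → ℂ} {V : β → Fin m → ℂ}

theorem integrable_hinn_prod (hU : ∀ l, Integrable (fun a => U a l) μ)
    (hV : ∀ l, Integrable (fun b => V b l) ν) :
    Integrable (fun ab : α × β => hinn (U ab.1) (V ab.2)) (μ.prod ν) :=
  integrable_finsetSum _ fun l _ => (hU l).mul_prod (hV l).conj

theorem integral_hinn_prod [SFinite μ] [SFinite ν] (hU : ∀ l, Integrable (fun a => U a l) μ)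
    (hV : ∀ l, Integrable (fun b => V b l) ν) :
    ∫ ab : α × β, hinn (U ab.1) (V ab.2) ∂(μ.prod ν)
      = hinn (fun l => ∫ a, U a l ∂μ) (fun l => ∫ b, V b l ∂ν) := by
  unfold hinn
  rw [integral_finsetSum _ fun l _ => (hU l).mul_prod (hV l).conj]
  refine Finset.sum_congr rfl fun l _ => ?_
  rw [integral_prod_mul (fun a => U a l) (fun b => starRingEnd ℂ (V b l)), integral_conj]

end HermitianProduct

section DiscretizedSketch

variable {d m P : ℕ} {D : Set (Fin d → ℝ)} {f : (Fin d → ℝ) → ℂ} {M : ℝ}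

theorem integrableOn_sketchKernel_mul [IsFiniteMeasure (volume.restrict D)] (w : Fin d → ℝ)
    (hD : MeasurableSet D) (hf : Measurable f) (hb : ∀ x ∈ D, ‖f x‖ ≤ M) :
    IntegrableOn (fun x => exp (-I * (ip w x : ℂ)) * f x) D := by
  have hkernel : Measurable fun x => exp (-I * (ip w x : ℂ)) := by
    unfold ip
    fun_prop
  refine (integrable_const M).mono' (hkernel.mul hf).aestronglyMeasurable ?_
  filter_upwards [ae_restrict_mem hD] with x hx
  rw [norm_mul, norm_exp]
  simpa using hb x hx

theorem integrable_dsk [IsFiniteMeasure (volume.restrict D)] (ω : Fin m → Fin d → ℝ)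
    (hD : MeasurableSet D) (hf : Measurable f) (hb : ∀ x ∈ D, ‖f x‖ ≤ M) (l : Fin m) :
    Integrable (fun p => dsk m P ω f p l) (Measure.pi fun _ => volume.restrict D) :=
  integrable_pi_empiricalAverage (g := fun x => exp (-I * (ip (ω l) x : ℂ)) * f x)
    (integrableOn_sketchKernel_mul (ω l) hD hf hb)

theorem integral_dsk [IsProbabilityMeasure (volume.restrict D)] (ω : Fin m → Fin d → ℝ)
    (hP : P ≠ 0) (hD : MeasurableSet D) (hf : Measurable f) (hb : ∀ x ∈ D, ‖f x‖ ≤ M) (l : Fin m) :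
    ∫ p, dsk m P ω f p l ∂(Measure.pi fun _ => volume.restrict D) = sk m ω D f l :=
  integral_pi_empiricalAverage (g := fun x => exp (-I * (ip (ω l) x : ℂ)) * f x) hP
    (integrableOn_sketchKernel_mul (ω l) hD hf hb)

end DiscretizedSketch

theorem expectation_two_grid_direction_is_gradient_general
    (d m d0 P : ℕ) (hP : 0 < P)
    (D : Set (Fin d → ℝ)) (hD : MeasurableSet D) (hD1 : volume D = 1)
    (ω : Fin m → Fin d → ℝ) (z : Fin m → ℂ)
    (μ : (Fin d0 → ℝ) → (Fin d → ℝ) → ℂ) (θ : Fin d0 → ℝ)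
    (dμ : Fin d0 → (Fin d → ℝ) → ℂ)
    (hmθ : Measurable (μ θ)) (hmd : ∀ i, Measurable (dμ i))
    (M : ℝ) (hbθ : ∀ x ∈ D, ‖μ θ x‖ ≤ M) (hbd : ∀ i, ∀ x ∈ D, ‖dμ i x‖ ≤ M)
    (G : (Fin d0 → ℝ) → ℝ)
    -- the directional derivative formula for G along each canonical direction
    (hG : ∀ i : Fin d0,
      HasDerivAt (fun t : ℝ => G (θ + t • (Pi.single i (1:ℝ) : Fin d0 → ℝ)))
        (2 * (hinn (sk m ω D (dμ i)) (sk m ω D (μ θ) - z)).re) 0) :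
    ∀ i : Fin d0,
      HasDerivAt (fun t : ℝ => G (θ + t • (Pi.single i (1:ℝ) : Fin d0 → ℝ)))
        (∫ pq : (Fin P → (Fin d → ℝ)) × (Fin P → (Fin d → ℝ)),
            2 * (hinn (dsk m P ω (dμ i) pq.1) (dsk m P ω (μ θ) pq.2 - z)).re
          ∂(Measure.prod
              (Measure.pi fun _ : Fin P => volume.restrict D)
              (Measure.pi fun _ : Fin P => volume.restrict D))) 0 := by
  intro i
  have : IsProbabilityMeasure (volume.restrict D) := ⟨by rwa [Measure.restrict_apply_univ]⟩
  have hA := integrable_dsk (P := P) ω hD (hmd i) (hbd i)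
  have hB : ∀ l, Integrable (fun q => (dsk m P ω (μ θ) q - z) l) _ := fun l =>
    (integrable_dsk ω hD hmθ hbθ l).sub (integrable_const (z l))
  have hre := integral_re (integrable_hinn_prod hA hB)
  simp only [RCLike.re_to_complex] at hre
  convert hG i using 1
  rw [integral_const_mul, hre, integral_hinn_prod hA hB]
  congr 3 with l
  · exact integral_dsk ω hP.ne' hD (hmd i) (hbd i) l
  · simp only [Pi.sub_apply]
    rw [integral_sub (integrable_dsk ω hD hmθ hbθ l) (integrable_const _),
      integral_dsk ω hP.ne' hD hmθ hbθ l, integral_const, probReal_univ, one_smul]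

/-- Lemma gradient_meth2: the two-grid stochastic direction `D_{p,q}` is, in
expectation, exactly the gradient of the sketch matching objective
`G(θ) = ‖Sμ_θ − ẑ‖²` (componentwise, i.e. each component of `E D_{p,q}` is the
corresponding partial derivative of `G` at `θ`). -/
theorem expectation_two_grid_direction_is_gradient
    (d m d0 P : ℕ) (hP : 0 < P)
    (D : Set (Fin d → ℝ)) (hD : MeasurableSet D) (hD1 : volume D = 1)
    (ω : Fin m → Fin d → ℝ) (z : Fin m → ℂ)
    (μ : (Fin d0 → ℝ) → (Fin d → ℝ) → ℂ) (θ : Fin d0 → ℝ)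
    (dμ : Fin d0 → (Fin d → ℝ) → ℂ)
    (hmθ : Measurable (μ θ)) (hmd : ∀ i, Measurable (dμ i))
    (M : ℝ) (hbθ : ∀ x ∈ D, ‖μ θ x‖ ≤ M) (hbd : ∀ i, ∀ x ∈ D, ‖dμ i x‖ ≤ M)
    (G : (Fin d0 → ℝ) → ℝ)
    (hGdef : ∀ θ', G θ' = ∑ l, Complex.normSq (sk m ω D (μ θ') l - z l))
    -- the directional derivative formula for G along each canonical direction
    (hG : ∀ i : Fin d0,
      HasDerivAt (fun t : ℝ => G (θ + t • (Pi.single i (1:ℝ) : Fin d0 → ℝ)))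
        (2 * (hinn (sk m ω D (dμ i)) (sk m ω D (μ θ) - z)).re) 0) :
    ∀ i : Fin d0,
      HasDerivAt (fun t : ℝ => G (θ + t • (Pi.single i (1:ℝ) : Fin d0 → ℝ)))
        (∫ pq : (Fin P → (Fin d → ℝ)) × (Fin P → (Fin d → ℝ)),
            2 * (hinn (dsk m P ω (dμ i) pq.1) (dsk m P ω (μ θ) pq.2 - z)).re
          ∂(Measure.prod
              (Measure.pi fun _ : Fin P => volume.restrict D)
              (Measure.pi fun _ : Fin P => volume.restrict D))) 0 :=
  expectation_two_grid_direction_is_gradient_general d m d0 P hP D hD hD1 ω z μ θ dμ hmθ hmd M hbθ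
    hbd G hG
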